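/- The ideal B_d satisfies (B_d)^{d+1} = 0, and (B_d)^d equals the ℤ-span of the single element (a₁−1)(a₂−1)⋯(a_d−1), which is nonzero; in particular B_d is nilpotent of degree exactly d+1. -/

import Mathlib

/-!
Put `b i = a i - 1`. The relation for `y i` says `b i * b i = 0`, and since `a i * a j` is a unit,
the relation for `y i * y j` says exactly that `b i` and `b j` anticommute. Every `g - 1` with
`g ∈ F_d` lies in the span of products of at least one `b i`, so `B_d ^ k` lies in the span of
products of at least `k` distinct `b i`; by anticommutation this span is zero for `k = d + 1` and
spanned by `b 1 ⋯ b d` for `k = d`. Conversely the same relations hold for the generators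
`e i` of the exterior algebra of `ℤ^d`, so `a i ↦ 1 + e i` defines a ring map `A_d → ⋀ ℤ^d`
sending `b 1 ⋯ b d` to `e 1 ∧ ⋯ ∧ e d ≠ 0`.
-/

noncomputable section

/-- The set `S_d = {y_i : 1 ≤ i ≤ d} ∪ {y_i y_j : 1 ≤ i < j ≤ d}` in the free group
of rank `d` (generators `y_{i+1} = FreeGroup.of i`). -/
def Sd (d : ℕ) : Set (FreeGroup (Fin d)) :=
  Set.range FreeGroup.of ∪
    {w | ∃ i j : Fin d, i < j ∧ w = FreeGroup.of i * FreeGroup.of j}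

/-- The relation imposing `(x - 1)² = 0` in `ℤ F_d` for every `x ∈ S_d`. -/
def quadRel (d : ℕ) (p q : MonoidAlgebra ℤ (FreeGroup (Fin d))) : Prop :=
  ∃ s ∈ Sd d, p = (MonoidAlgebra.of ℤ (FreeGroup (Fin d)) s - 1) ^ 2 ∧ q = 0

/-- The quotient ring `A_d = ℤ F_d / ⟨(x-1)² : x ∈ S_d⟩`. -/
abbrev Ad (d : ℕ) := RingQuot (quadRel d)

/-- The augmentation `ℤ F_d → ℤ` (every group element maps to `1`). -/
def aug0 (d : ℕ) : MonoidAlgebra ℤ (FreeGroup (Fin d)) →ₐ[ℤ] ℤ :=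
  MonoidAlgebra.lift ℤ ℤ (FreeGroup (Fin d)) 1

/-- The induced augmentation `A_d → ℤ`. -/
def aug (d : ℕ) : Ad d →ₐ[ℤ] ℤ :=
  RingQuot.liftAlgHom ℤ ⟨aug0 d, by
    rintro p q ⟨s, _, rfl, rfl⟩
    simp [aug0]⟩

/-- `B_d`, the image in `A_d` of the augmentation ideal of `ℤ F_d`, i.e. the kernel of
the induced augmentation `A_d → ℤ` (a two-sided ideal, viewed as a `ℤ`-submodule so
that its powers make sense). -/
def Bd (d : ℕ) : Submodule ℤ (Ad d) := LinearMap.ker (aug d).toLinearMap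

/-- `a_i`, the image of the generator `y_i` in `A_d`. -/
def ai (d : ℕ) (i : Fin d) : Ad d :=
  RingQuot.mkAlgHom ℤ (quadRel d) (MonoidAlgebra.of ℤ (FreeGroup (Fin d)) (FreeGroup.of i))

section SquareZero

variable {R : Type*} [Ring R] {x y : R}

def unitOneAdd (hx : x * x = 0) : Rˣ where
  val := 1 + x
  inv := 1 - x
  val_inv := by rw [← (Commute.one_left x).mul_self_sub_mul_self_eq, mul_one, hx, sub_zero]
  inv_val := by rw [← (Commute.one_left x).mul_self_sub_mul_self_eq', mul_one, hx, sub_zero]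

theorem one_add_mul_one_add_sub_one_sq (hx : x * x = 0) (hy : y * y = 0) :
    ((1 + x) * (1 + y) - 1) ^ 2 = (1 + x) * (1 + y) * (x * y + y * x) := by
  have hx' : ∀ z, x * (x * z) = 0 := fun z => by rw [← mul_assoc, hx, zero_mul]
  have hy' : ∀ z, y * (y * z) = 0 := fun z => by rw [← mul_assoc, hy, zero_mul]
  have hz : (1 + x) * (1 + y) - 1 = x + y + x * y := by noncomm_ring
  rw [hz, sq]
  simp only [mul_add, add_mul, mul_one, one_mul, mul_assoc, hx, hy, hx', hy', mul_zero, zero_add,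
    add_zero]
  abel

theorem one_add_mul_one_add_sub_one_sq_eq_zero_iff (hx : x * x = 0) (hy : y * y = 0) :
    ((1 + x) * (1 + y) - 1) ^ 2 = 0 ↔ y * x = -(x * y) := by
  have hu : IsUnit ((1 + x) * (1 + y)) := (unitOneAdd hx * unitOneAdd hy).isUnit
  rw [one_add_mul_one_add_sub_one_sq hx hy, hu.mul_right_eq_zero, add_comm, add_eq_zero_iff_eq_neg]

end SquareZero

theorem Submodule.list_prod_mem_pow {A : Type*} [Ring A] {M : Submodule ℤ A} {l : List A}
    (h : ∀ x ∈ l, x ∈ M) : l.prod ∈ M ^ l.length := by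
  induction l with
  | nil => simp [Submodule.one_eq_span]
  | cons x l ih =>
    rw [List.prod_cons, List.length_cons, pow_succ']
    exact Submodule.mul_mem_mul (h x List.mem_cons_self)
      (ih fun y hy => h y (List.mem_cons_of_mem x hy))

theorem ExteriorAlgebra.ιMulti_pi_single_ne_zero {R : Type*} [CommRing R] [Nontrivial R] (n : ℕ) :
    ExteriorAlgebra.ιMulti R n (fun i => (Pi.single i 1 : Fin n → R)) ≠ 0 := by
  intro h
  have hdet := ExteriorAlgebra.liftAlternating_apply_ιMulti
    (Pi.single (M := fun k => (Fin n → R) [⋀^Fin k]→ₗ[R] R) n Matrix.detRowAlternating)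
    (fun i => (Pi.single i 1 : Fin n → R))
  rw [h, map_zero, Pi.single_eq_same] at hdet
  change (0 : R) = (Matrix.of fun i => (Pi.single i 1 : Fin n → R)).det at hdet
  have hone : Matrix.of (fun i => (Pi.single i 1 : Fin n → R)) = 1 := by
    ext i j
    simp [Matrix.one_apply, Pi.single_apply, eq_comm]
  rw [hone, Matrix.det_one] at hdet
  exact zero_ne_one hdet

section MonomialSpan

variable {R ι : Type*} [Ring R] (b : ι → R)

def monomialSpan (k : ℕ) : Submodule ℤ R :=
  Submodule.span ℤ {x | ∃ l : List ι, l.Nodup ∧ k ≤ l.length ∧ x = (l.map b).prod}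

variable {b}

theorem monomialSpan_antitone : Antitone (monomialSpan b) := fun _ _ hkm =>
  Submodule.span_mono fun _ ⟨l, hl, hk, hx⟩ => ⟨l, hl, hkm.trans hk, hx⟩

theorem prod_mem_monomialSpan {l : List ι} (hl : l.Nodup) :
    (l.map b).prod ∈ monomialSpan b l.length :=
  Submodule.subset_span ⟨l, hl, le_rfl, rfl⟩

theorem one_mem_monomialSpan_zero : (1 : R) ∈ monomialSpan b 0 :=
  prod_mem_monomialSpan (l := []) List.nodup_nil

theorem prod_mul_eq_neg_one_pow_smul (hanti : ∀ i j, b j * b i = -(b i * b j))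
    (l : List ι) (i : ι) :
    (l.map b).prod * b i = (-1 : ℤ) ^ l.length • (b i * (l.map b).prod) := by
  induction l with
  | nil => simp
  | cons j l ih =>
    rw [List.map_cons, List.prod_cons, mul_assoc, ih, mul_smul_comm, ← mul_assoc, hanti,
      List.length_cons, pow_succ, mul_comm, mul_smul, neg_mul, mul_assoc]
    simp

theorem prod_mul_eq_zero_of_mem (hsq : ∀ i, b i * b i = 0)
    (hanti : ∀ i j, b j * b i = -(b i * b j)) {l : List ι} {i : ι} (hi : i ∈ l) :
    (l.map b).prod * b i = 0 := by
  obtain ⟨l₁, l₂, rfl⟩ := List.append_of_mem hi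
  rw [List.map_append, List.prod_append, List.map_cons, List.prod_cons, mul_assoc, mul_assoc,
    prod_mul_eq_neg_one_pow_smul hanti, mul_smul_comm, ← mul_assoc, hsq, zero_mul, smul_zero,
    mul_zero]

theorem mul_mem_monomialSpan_succ (hsq : ∀ i, b i * b i = 0)
    (hanti : ∀ i j, b j * b i = -(b i * b j)) {k : ℕ} {x : R} (hx : x ∈ monomialSpan b k)
    (i : ι) : x * b i ∈ monomialSpan b (k + 1) := by
  induction hx using Submodule.span_induction with
  | mem x hx =>
    obtain ⟨l, hl, hk, rfl⟩ := hx
    by_cases hi : i ∈ l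
    · rw [prod_mul_eq_zero_of_mem hsq hanti hi]
      exact zero_mem _
    · have hli : (l ++ [i]).Nodup := hl.append (List.nodup_singleton i) (by simpa using hi)
      have hmem := prod_mem_monomialSpan (b := b) hli
      rw [List.map_append, List.prod_append, List.map_singleton, List.prod_singleton,
        List.length_append, List.length_singleton] at hmem
      exact monomialSpan_antitone (by omega) hmem
  | zero => rw [zero_mul]; exact zero_mem _
  | add x y _ _ hx hy => rw [add_mul]; exact add_mem hx hy
  | smul n x _ hx => rw [smul_mul_assoc]; exact Submodule.smul_mem _ n hx

theorem mul_prod_mem_monomialSpan (hsq : ∀ i, b i * b i = 0)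
    (hanti : ∀ i j, b j * b i = -(b i * b j)) (l : List ι) :
    ∀ {k : ℕ} {x : R}, x ∈ monomialSpan b k →
      x * (l.map b).prod ∈ monomialSpan b (k + l.length) := by
  induction l with
  | nil => intro k x hx; simpa using hx
  | cons i l ih =>
    intro k x hx
    rw [List.map_cons, List.prod_cons, ← mul_assoc, List.length_cons, ← add_assoc,
      add_right_comm]
    exact ih (mul_mem_monomialSpan_succ hsq hanti hx i)

theorem monomialSpan_mul_le (hsq : ∀ i, b i * b i = 0)
    (hanti : ∀ i j, b j * b i = -(b i * b j)) (k m : ℕ) :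
    monomialSpan b k * monomialSpan b m ≤ monomialSpan b (k + m) := by
  refine Submodule.mul_le.mpr fun x hx y hy => ?_
  induction hy using Submodule.span_induction with
  | mem y hy =>
    obtain ⟨l, -, hm, rfl⟩ := hy
    exact monomialSpan_antitone (by omega) (mul_prod_mem_monomialSpan hsq hanti l hx)
  | zero => rw [mul_zero]; exact zero_mem _
  | add y z _ _ hy hz => rw [mul_add]; exact add_mem hy hz
  | smul n y _ hy => rw [mul_smul_comm]; exact Submodule.smul_mem _ n hy

theorem pow_le_monomialSpan (hsq : ∀ i, b i * b i = 0)
    (hanti : ∀ i j, b j * b i = -(b i * b j)) {N : Submodule ℤ R}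
    (hN : N ≤ monomialSpan b 1) (k : ℕ) : N ^ k ≤ monomialSpan b k := by
  induction k with
  | zero =>
    rw [Submodule.pow_zero, Submodule.one_eq_span, Submodule.span_le, Set.singleton_subset_iff]
    exact one_mem_monomialSpan_zero
  | succ k ih =>
    rw [Submodule.pow_succ]
    exact (mul_le_mul' ih hN).trans (monomialSpan_mul_le hsq hanti k 1)

theorem prod_mem_span_prod_of_perm (hanti : ∀ i j, b j * b i = -(b i * b j))
    {l l' : List ι} (h : l.Perm l') : (l.map b).prod ∈ ℤ ∙ (l'.map b).prod := by
  induction h with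
  | nil => exact Submodule.mem_span_singleton_self _
  | cons i _ ih =>
    obtain ⟨n, hn⟩ := Submodule.mem_span_singleton.mp ih
    simp only [List.map_cons, List.prod_cons]
    exact Submodule.mem_span_singleton.mpr ⟨n, by rw [← hn, mul_smul_comm]⟩
  | swap i j l =>
    simp only [List.map_cons, List.prod_cons]
    rw [← mul_assoc (b j), hanti i j, neg_mul, mul_assoc]
    exact Submodule.neg_mem _ (Submodule.mem_span_singleton_self _)
  | trans _ _ ih₁ ih₂ =>
    exact (Submodule.span_singleton_le_iff_mem _ _).mpr ih₂ ih₁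

variable {L : List ι}

theorem monomialSpan_length_succ_eq_bot (hL : ∀ i, i ∈ L) :
    monomialSpan b (L.length + 1) = ⊥ := by
  refine eq_bot_iff.mpr (Submodule.span_le.mpr ?_)
  rintro _ ⟨l, hl, hk, -⟩
  have hlen := (List.subperm_of_subset hl fun i _ => hL i).length_le
  omega

theorem monomialSpan_length_le_span_prod (hanti : ∀ i j, b j * b i = -(b i * b j))
    (hL : ∀ i, i ∈ L) :
    monomialSpan b L.length ≤ ℤ ∙ (L.map b).prod := by
  refine Submodule.span_le.mpr ?_
  rintro _ ⟨l, hl, hk, rfl⟩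
  exact prod_mem_span_prod_of_perm hanti
    ((List.subperm_of_subset hl fun i _ => hL i).perm_of_length_le hk)

end MonomialSpan

namespace Ad

variable {d : ℕ}

def ofGroup (d : ℕ) : FreeGroup (Fin d) →* Ad d :=
  (RingQuot.mkAlgHom ℤ (quadRel d)).toMonoidHom.comp (MonoidAlgebra.of ℤ (FreeGroup (Fin d)))

theorem ofGroup_of (i : Fin d) : ofGroup d (FreeGroup.of i) = ai d i := rfl

theorem ofGroup_sub_one_sq {s : FreeGroup (Fin d)} (hs : s ∈ Sd d) :
    (ofGroup d s - 1) ^ 2 = 0 := by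
  have hrel := RingQuot.mkAlgHom_rel ℤ (s := quadRel d) (⟨s, hs, rfl, rfl⟩ :
    quadRel d ((MonoidAlgebra.of ℤ (FreeGroup (Fin d)) s - 1) ^ 2) 0)
  rwa [map_pow, map_sub, map_one, map_zero] at hrel

theorem ai_sub_one_mul_self (i : Fin d) : (ai d i - 1) * (ai d i - 1) = 0 := by
  rw [← sq, ← ofGroup_of]
  exact ofGroup_sub_one_sq (Or.inl ⟨i, rfl⟩)

theorem ai_sub_one_anticomm (i j : Fin d) :
    (ai d j - 1) * (ai d i - 1) = -((ai d i - 1) * (ai d j - 1)) := by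
  wlog hij : i < j generalizing i j
  · rcases (not_lt.mp hij).lt_or_eq with hji | rfl
    · rw [this j i hji, neg_neg]
    · rw [ai_sub_one_mul_self, neg_zero]
  have hrel := ofGroup_sub_one_sq (d := d) (Or.inr ⟨i, j, hij, rfl⟩)
  rwa [map_mul, ofGroup_of, ofGroup_of, ← add_sub_cancel 1 (ai d i), ← add_sub_cancel 1 (ai d j),
    one_add_mul_one_add_sub_one_sq_eq_zero_iff (ai_sub_one_mul_self i) (ai_sub_one_mul_self j)]
    at hrel

theorem ofGroup_sub_one_mem_monomialSpan_one (g : FreeGroup (Fin d)) :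
    ofGroup d g - 1 ∈ monomialSpan (fun i => ai d i - 1) 1 := by
  induction g using FreeGroup.induction_on with
  | C1 => rw [map_one, sub_self]; exact zero_mem _
  | of i =>
    rw [ofGroup_of]
    simpa using prod_mem_monomialSpan (b := fun i => ai d i - 1) (List.nodup_singleton i)
  | inv_of i hi =>
    have hinv : ofGroup d (FreeGroup.of i)⁻¹ = 1 - (ai d i - 1) :=
      left_inv_eq_right_inv (a := 1 + (ai d i - 1))
        (by rw [add_sub_cancel, ← ofGroup_of, ← map_mul, inv_mul_cancel, map_one])
        (unitOneAdd (ai_sub_one_mul_self i)).mul_inv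
    rw [hinv, sub_sub_cancel_left]
    exact neg_mem hi
  | mul g h hg hh =>
    have hmul : ofGroup d (g * h) - 1 =
        (ofGroup d g - 1) * (ofGroup d h - 1) + (ofGroup d g - 1) + (ofGroup d h - 1) := by
      rw [map_mul]; simp only [mul_sub, sub_mul, mul_one, one_mul]; abel
    rw [hmul]
    refine add_mem (add_mem ?_ hg) hh
    exact monomialSpan_antitone (by omega) <| monomialSpan_mul_le ai_sub_one_mul_self
      ai_sub_one_anticomm 1 1 (Submodule.mul_mem_mul hg hh)

theorem aug_ofGroup (g : FreeGroup (Fin d)) : aug d (ofGroup d g) = 1 := by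
  show aug d (RingQuot.mkAlgHom ℤ (quadRel d) (MonoidAlgebra.of ℤ _ g)) = 1
  rw [aug, RingQuot.liftAlgHom_mkAlgHom_apply]
  simp [aug0]

theorem sub_aug_mem_monomialSpan_one (x : Ad d) :
    x - (aug d x : Ad d) ∈ monomialSpan (fun i => ai d i - 1) 1 := by
  obtain ⟨z, rfl⟩ := RingQuot.mkAlgHom_surjective ℤ (quadRel d) x
  induction z using MonoidAlgebra.induction_linear with
  | zero => simp
  | add z w hz hw =>
    rw [map_add, map_add, Int.cast_add, add_sub_add_comm]
    exact add_mem hz hw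
  | single g n =>
    have hsingle :
        RingQuot.mkAlgHom ℤ (quadRel d) (MonoidAlgebra.single g n) = n • ofGroup d g := by
      rw [show MonoidAlgebra.single g n = n • MonoidAlgebra.single g 1 by
        rw [MonoidAlgebra.smul_single', mul_one], map_zsmul]
      rfl
    rw [hsingle, map_zsmul, aug_ofGroup, smul_eq_mul, mul_one, zsmul_eq_mul, ← mul_sub_one,
      ← zsmul_eq_mul]
    exact Submodule.smul_mem _ n (ofGroup_sub_one_mem_monomialSpan_one g)

theorem Bd_le_monomialSpan_one : Bd d ≤ monomialSpan (fun i => ai d i - 1) 1 := by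
  intro x hx
  have hx0 : aug d x = 0 := hx
  simpa [hx0] using sub_aug_mem_monomialSpan_one x

theorem ai_sub_one_mem_Bd (i : Fin d) : ai d i - 1 ∈ Bd d := by
  show aug d (ofGroup d (FreeGroup.of i) - 1) = 0
  rw [map_sub, aug_ofGroup, map_one, sub_self]

variable {R : Type*} [Ring R]

def lift (e : Fin d → R) (hsq : ∀ i, e i * e i = 0) (hanti : ∀ i j, e j * e i = -(e i * e j)) :
    Ad d →ₐ[ℤ] R :=
  RingQuot.liftAlgHom ℤ ⟨MonoidAlgebra.lift ℤ R (FreeGroup (Fin d))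
    ((Units.coeHom R).comp (FreeGroup.lift fun i => unitOneAdd (hsq i))), by
      rintro _ _ ⟨s, ⟨i, rfl⟩ | ⟨i, j, -, rfl⟩, rfl, rfl⟩
      · simp [unitOneAdd, hsq, sq]
      · simp only [map_pow, map_sub, map_one, map_zero, MonoidAlgebra.lift_of, MonoidHom.comp_apply,
          map_mul, FreeGroup.lift_apply_of, Units.coeHom_apply]
        exact (one_add_mul_one_add_sub_one_sq_eq_zero_iff (hsq i) (hsq j)).mpr (hanti i j)⟩

theorem lift_ai (e : Fin d → R) (hsq : ∀ i, e i * e i = 0)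
    (hanti : ∀ i j, e j * e i = -(e i * e j)) (i : Fin d) :
    lift e hsq hanti (ai d i) = 1 + e i := by
  rw [lift, ai, RingQuot.liftAlgHom_mkAlgHom_apply]
  simp [unitOneAdd]

theorem prod_ai_sub_one_ne_zero : (List.ofFn fun i : Fin d => ai d i - 1).prod ≠ 0 := by
  let e : Fin d → ExteriorAlgebra ℤ (Fin d → ℤ) := fun i => ExteriorAlgebra.ι ℤ (Pi.single i 1)
  have hsq : ∀ i, e i * e i = 0 := fun i => ExteriorAlgebra.ι_sq_zero _
  have hanti : ∀ i j, e j * e i = -(e i * e j) := fun i j =>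
    eq_neg_of_add_eq_zero_right (ExteriorAlgebra.ι_add_mul_swap _ _)
  have himage : lift e hsq hanti (List.ofFn fun i : Fin d => ai d i - 1).prod =
      ExteriorAlgebra.ιMulti ℤ d (fun i => (Pi.single i 1 : Fin d → ℤ)) := by
    simp [map_list_prod, List.map_ofFn, ExteriorAlgebra.ιMulti_apply, lift_ai, e, Function.comp_def]
  intro h
  rw [h, map_zero] at himage
  exact ExteriorAlgebra.ιMulti_pi_single_ne_zero d himage.symm

end Ad

/-- `(B_d)^(d+1) = 0`, and `(B_d)^d` is the `ℤ`-span of the single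
element `(a₁-1)(a₂-1)⋯(a_d-1)`, which is nonzero; in particular `B_d` is nilpotent of
degree exactly `d+1`. -/
theorem Bd_nilpotency :
    ∀ d : ℕ,
      Bd d ^ (d + 1) = ⊥ ∧
      Bd d ^ d = Submodule.span ℤ {(List.ofFn fun i : Fin d => ai d i - 1).prod} ∧
      (List.ofFn fun i : Fin d => ai d i - 1).prod ≠ 0 := by
  intro d
  have hsq := Ad.ai_sub_one_mul_self (d := d)
  have hanti := Ad.ai_sub_one_anticomm (d := d)
  have hpow := pow_le_monomialSpan hsq hanti Ad.Bd_le_monomialSpan_one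
  have hL : ∀ i : Fin d, i ∈ List.finRange d := List.mem_finRange
  have hP : List.ofFn (fun i : Fin d => ai d i - 1) = (List.finRange d).map fun i => ai d i - 1 :=
    List.ofFn_eq_map
  refine ⟨?_, le_antisymm ?_ ?_, Ad.prod_ai_sub_one_ne_zero⟩
  · have hbot := monomialSpan_length_succ_eq_bot (b := fun i => ai d i - 1) hL
    rw [List.length_finRange] at hbot
    exact le_bot_iff.mp (hbot ▸ hpow (d + 1))
  · have hspan := monomialSpan_length_le_span_prod hanti hL
    rw [List.length_finRange, ← hP] at hspan
    exact (hpow d).trans hspan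
  · rw [Submodule.span_le, Set.singleton_subset_iff]
    have hmem := Submodule.list_prod_mem_pow (M := Bd d)
      (l := List.ofFn fun i : Fin d => ai d i - 1) (by simpa using Ad.ai_sub_one_mem_Bd)
    rwa [List.length_ofFn] at hmem
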